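/- arXiv:2502.09898 — 4 statements merged into one kernel-verified Lean document; each statement's English description precedes it below -/
import Mathlib

section
/- Let (φ_i)_{i∈I} be a finite frame for ℝ^n and let α ∈ ℝ^I be a bias vector such that the ReLU layer C_α is one-to-one. If κ ≥ 0 satisfies κ‖x−y‖ ≤ ‖C_α(x) − C_α(y)‖ for all x, y ∈ ℝ^n (i.e., κ is a lower Lipschitz bound for C_α), then for every x ∈ ℝ^n and every z ∈ ℝ^n one has κ²‖z‖² ≤ Σ_{i∈I_α(x)} |⟨z,φ_i⟩|²; that is, κ² is a lower frame bound of every activated collection. -/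
/-!
Perturb `x` by `t • z` with `t ≠ 0` small. Coordinates inactive at `x` (`⟪x, φ i⟫ < α i`) stay
inactive, so they do not contribute to `C (x + t • z) - C x`, and since `max 0` is 1-Lipschitz
each active coordinate moves by at most `|t| |⟪z, φ i⟫|`. Hence
`κ² t² ‖z‖² ≤ ‖C (x + t • z) - C x‖² ≤ t² ∑_{active} ⟪z, φ i⟫²`; divide by `t²`.
-/

open RealInnerProductSpace Finset Filter Topology

lemma sq_max_zero_add_sub_max_zero_le (a s : ℝ) : (max 0 (a + s) - max 0 a) ^ 2 ≤ s ^ 2 := by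
  simpa [max_comm] using sq_le_sq.2 (abs_max_sub_max_le_abs (a + s) a 0)

lemma eventually_forall_add_mul_neg {ι : Type*} [Finite ι] (a b : ι → ℝ) :
    ∀ᶠ t in 𝓝 (0 : ℝ), ∀ i, a i < 0 → a i + t * b i < 0 := by
  refine eventually_all.2 fun i => ?_
  by_cases hi : a i < 0
  · have hcont : Continuous fun t : ℝ => a i + t * b i := by fun_prop
    filter_upwards [hcont.tendsto' 0 (a i) (by simp) |>.eventually (eventually_lt_nhds hi)]
      with t ht using fun _ => ht
  · exact Eventually.of_forall fun _ h => absurd h hi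

lemma sum_sq_max_zero_add_mul_sub_le {ι : Type*} [Fintype ι] (a b : ι → ℝ) (t : ℝ)
    (ht : ∀ i, a i < 0 → a i + t * b i < 0) :
    ∑ i, (max 0 (a i + t * b i) - max 0 (a i)) ^ 2 ≤
      t ^ 2 * ∑ i ∈ univ.filter (fun i => 0 ≤ a i), b i ^ 2 := by
  rw [← sum_filter_add_sum_filter_not univ (fun i => 0 ≤ a i), mul_sum]
  have hinactive : ∑ i ∈ univ.filter (fun i => ¬ 0 ≤ a i),
      (max 0 (a i + t * b i) - max 0 (a i)) ^ 2 = 0 :=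
    sum_eq_zero fun i hi => by
      have hai : a i < 0 := not_le.1 (mem_filter.1 hi).2
      rw [max_eq_left (ht i hai).le, max_eq_left hai.le, sub_self, sq, zero_mul]
  rw [hinactive, add_zero]
  exact sum_le_sum fun i _ => (sq_max_zero_add_sub_max_zero_le _ _).trans_eq (mul_pow t (b i) 2)

section ReluLayer

variable {E ι : Type*} [NormedAddCommGroup E] [InnerProductSpace ℝ E] [Fintype ι]

def reluLayer (φ : ι → E) (α : ι → ℝ) (x : E) : EuclideanSpace ℝ ι :=
  WithLp.toLp 2 fun i => max 0 (⟪x, φ i⟫ - α i)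

lemma eventually_norm_reluLayer_add_smul_sub_sq_le (φ : ι → E) (α : ι → ℝ) (x z : E) :
    ∀ᶠ t in 𝓝 (0 : ℝ), ‖reluLayer φ α (x + t • z) - reluLayer φ α x‖ ^ 2 ≤
      t ^ 2 * ∑ i ∈ univ.filter (fun i => α i ≤ ⟪x, φ i⟫), ⟪z, φ i⟫ ^ 2 := by
  filter_upwards [eventually_forall_add_mul_neg (fun i => ⟪x, φ i⟫ - α i) (fun i => ⟪z, φ i⟫)]
    with t ht
  have hcoord (i : ι) : ⟪x + t • z, φ i⟫ - α i = (⟪x, φ i⟫ - α i) + t * ⟪z, φ i⟫ := by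
    rw [inner_add_left, real_inner_smul_left]; ring
  simp only [EuclideanSpace.norm_sq_eq, reluLayer, PiLp.sub_apply, Real.norm_eq_abs, sq_abs,
    hcoord]
  simpa only [sub_nonneg] using sum_sq_max_zero_add_mul_sub_le _ _ t ht

end ReluLayer

theorem relu_layer_lower_lipschitz_gives_frame_bound_general
    {n : ℕ} {ι : Type*} [Fintype ι]
    (φ : ι → EuclideanSpace ℝ (Fin n)) (α : ι → ℝ)
    (C : EuclideanSpace ℝ (Fin n) → EuclideanSpace ℝ ι)
    (hC : ∀ x, C x = fun i : ι => max 0 (⟪x, φ i⟫ - α i))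
    (κ : ℝ) (hκ : 0 ≤ κ)
    (hlip : ∀ x y : EuclideanSpace ℝ (Fin n), κ * ‖x - y‖ ≤ ‖C x - C y‖) :
    ∀ x z : EuclideanSpace ℝ (Fin n),
      κ ^ 2 * ‖z‖ ^ 2 ≤ ∑ i ∈ univ.filter (fun i : ι => α i ≤ ⟪x, φ i⟫), ⟪z, φ i⟫ ^ 2 := by
  intro x z
  obtain rfl : C = reluLayer φ α := funext fun x => (WithLp.ofLp_injective 2) (hC x)
  obtain ⟨t, hbound, ht⟩ := ((eventually_norm_reluLayer_add_smul_sub_sq_le φ α x z).filter_mono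
    nhdsWithin_le_nhds |>.and self_mem_nhdsWithin).exists (f := 𝓝[≠] (0 : ℝ))
  refine le_of_mul_le_mul_left ?_ (pow_pos (abs_pos.2 ht) 2)
  calc |t| ^ 2 * (κ ^ 2 * ‖z‖ ^ 2) = (κ * ‖(x + t • z) - x‖) ^ 2 := by
        rw [add_sub_cancel_left, norm_smul, Real.norm_eq_abs]; ring
    _ ≤ ‖reluLayer φ α (x + t • z) - reluLayer φ α x‖ ^ 2 :=
        pow_le_pow_left₀ (by positivity) (hlip _ _) 2
    _ ≤ t ^ 2 * _ := hbound
    _ = |t| ^ 2 * _ := by rw [sq_abs]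

/-- If `κ` is a lower Lipschitz bound for an injective ReLU layer `C_α`
associated with a finite frame, then `κ²` is a lower frame bound of every activated
collection `(φ_i)_{i ∈ I_α(x)}`. -/
theorem relu_layer_lower_lipschitz_gives_frame_bound
    {n : ℕ} {ι : Type*} [Fintype ι]
    (φ : ι → EuclideanSpace ℝ (Fin n)) (α : ι → ℝ)
    (hframe : Submodule.span ℝ (Set.range φ) = ⊤)
    (C : EuclideanSpace ℝ (Fin n) → EuclideanSpace ℝ ι)
    (hC : ∀ x, C x = fun i : ι => max 0 (⟪x, φ i⟫ - α i))
    (hinj : Function.Injective C)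
    (κ : ℝ) (hκ : 0 ≤ κ)
    (hlip : ∀ x y : EuclideanSpace ℝ (Fin n), κ * ‖x - y‖ ≤ ‖C x - C y‖) :
    ∀ x z : EuclideanSpace ℝ (Fin n),
      κ ^ 2 * ‖z‖ ^ 2 ≤ ∑ i ∈ univ.filter (fun i : ι => α i ≤ ⟪x, φ i⟫), ⟪z, φ i⟫ ^ 2 :=
  relu_layer_lower_lipschitz_gives_frame_bound_general φ α C hC κ hκ hlip
end

section
/- Let (φ_i)_{i∈I} be a finite family of vectors in ℝ^n and let (ψ_j)_{j∈J} denote the symmetrized family (φ_i)_{i∈I} ∪ (−φ_i)_{i∈I}. Fix the zero bias and for x ∈ ℝ^n let I_0(x) = {j ∈ J : ⟨x,ψ_j⟩ ≥ 0} be the activated index set. Then: (a) if A ≥ 0 satisfies A‖z‖² ≤ Σ_{i∈I}|⟨z,φ_i⟩|² for all z ∈ ℝ^n, then for every x ∈ ℝ^n and every z ∈ ℝ^n one has A‖z‖² ≤ Σ_{j∈I_0(x)}|⟨z,ψ_j⟩|²; (b) if x ∈ ℝ^n satisfies ⟨x,φ_i⟩ ≠ 0 for all i ∈ I, then Σ_{j∈I_0(x)}|⟨z,ψ_j⟩|²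 = Σ_{i∈I}|⟨z,φ_i⟩|² for every z ∈ ℝ^n. In particular, the optimal lower frame bound A_0 = min_x over the activated collections of the symmetrized family equals the optimal lower frame bound A of (φ_i)_{i∈I}. -/
open RealInnerProductSpace Finset

/-! The index `i` contributes `⟪z, φ i⟫ ^ 2` to the activated sum of the symmetrized family once
through `φ i` or `-φ i`, whichever makes a nonnegative angle with `x`, and a second time exactly
when `⟪x, φ i⟫ = 0`. So the activated sum is the full frame sum plus a nonnegative excess that
vanishes when `x` is orthogonal to none of the `φ i`. -/

section

variable {E : Type*} [NormedAddCommGroup E] [InnerProductSpace ℝ E] {ι : Type*} [Fintype ι]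

def symmetrization (φ : ι → E) : ι ⊕ ι → E := Sum.elim φ (fun i => -φ i)

noncomputable def activatedSet {J : Type*} [Fintype J] (ψ : J → E) (x : E) : Finset J :=
  univ.filter (fun j => 0 ≤ ⟪x, ψ j⟫)

theorem sum_activatedSet_symmetrization (φ : ι → E) (x z : E) :
    ∑ j ∈ activatedSet (symmetrization φ) x, ⟪z, symmetrization φ j⟫ ^ 2 =
      ∑ i, ⟪z, φ i⟫ ^ 2 + ∑ i ∈ univ.filter (fun i => ⟪x, φ i⟫ = 0), ⟪z, φ i⟫ ^ 2 := by
  rw [activatedSet, sum_filter, Fintype.sum_sum_type, sum_filter, ← sum_add_distrib,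
    ← sum_add_distrib]
  refine sum_congr rfl fun i _ => ?_
  simp only [symmetrization, Sum.elim_inl, Sum.elim_inr, inner_neg_right, neg_sq, neg_nonneg]
  split_ifs <;> grind

theorem sum_sq_inner_le_sum_activatedSet_symmetrization (φ : ι → E) (x z : E) :
    ∑ i, ⟪z, φ i⟫ ^ 2 ≤ ∑ j ∈ activatedSet (symmetrization φ) x, ⟪z, symmetrization φ j⟫ ^ 2 := by
  rw [sum_activatedSet_symmetrization]
  exact le_add_of_nonneg_right (sum_nonneg fun i _ => sq_nonneg _)

theorem sum_activatedSet_symmetrization_of_inner_ne_zero (φ : ι → E) {x : E}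
    (hx : ∀ i, ⟪x, φ i⟫ ≠ 0) (z : E) :
    ∑ j ∈ activatedSet (symmetrization φ) x, ⟪z, symmetrization φ j⟫ ^ 2 = ∑ i, ⟪z, φ i⟫ ^ 2 := by
  rw [sum_activatedSet_symmetrization, filter_false_of_mem fun i _ => hx i, sum_empty, add_zero]

end

/-- For the symmetrized family `ψ = (φ_i) ∪ (−φ_i)` with zero bias:
(a) a lower frame bound `A` of `(φ_i)` is a lower frame bound of every activated
collection `(ψ_j)_{j ∈ I_0(x)}`;
(b) if `⟨x,φ_i⟩ ≠ 0` for all `i`, then the activated collection at `x` has the same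
sums of squared frame coefficients as `(φ_i)` itself. -/
theorem symmetrized_activated_frame_bounds
    {n : ℕ} {ι : Type*} [Fintype ι]
    (φ : ι → EuclideanSpace ℝ (Fin n))
    (ψ : ι ⊕ ι → EuclideanSpace ℝ (Fin n))
    (hψ : ψ = Sum.elim φ (fun i => -φ i)) :
    ((∀ A : ℝ, 0 ≤ A →
        (∀ z : EuclideanSpace ℝ (Fin n), A * ‖z‖ ^ 2 ≤ ∑ i : ι, ⟪z, φ i⟫ ^ 2) →
        ∀ x z : EuclideanSpace ℝ (Fin n),
          A * ‖z‖ ^ 2 ≤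
            ∑ j ∈ univ.filter (fun j : ι ⊕ ι => 0 ≤ ⟪x, ψ j⟫), ⟪z, ψ j⟫ ^ 2) ∧
      (∀ x : EuclideanSpace ℝ (Fin n), (∀ i : ι, ⟪x, φ i⟫ ≠ 0) →
        ∀ z : EuclideanSpace ℝ (Fin n),
          ∑ j ∈ univ.filter (fun j : ι ⊕ ι => 0 ≤ ⟪x, ψ j⟫), ⟪z, ψ j⟫ ^ 2 =
            ∑ i : ι, ⟪z, φ i⟫ ^ 2)) := by
  subst hψ
  exact ⟨fun A _ hA x z => (hA z).trans (sum_sq_inner_le_sum_activatedSet_symmetrization φ x z),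
    fun x hx z => sum_activatedSet_symmetrization_of_inner_ne_zero φ hx z⟩
end

section
/- Let (φ_i)_{i∈I} be a finite family of vectors in ℝ^n and let λ > 0. If A ≥ 0 satisfies A‖z‖² ≤ Σ_{i∈I_λ(x)} |⟨z,φ_i⟩|² for every x in the closed unit ball B of ℝ^n and every z ∈ ℝ^n (i.e., A is a lower frame bound of every unsaturated collection), then for all x, y ∈ B one has min{(1/2)·√A, λ}·‖x−y‖ ≤ ‖S_λ(x) − S_λ(y)‖. -/
/-!
Coordinatewise, `σ_λ` is the clamp of `t` to `[-λ, λ]`. If some measurement saturates at `+λ`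
for `x` and at `-λ` for `y` (or vice versa), that coordinate alone contributes `2λ ≥ λ‖x - y‖`.
Otherwise, at every index unsaturated at the midpoint `m = (x + y)/2`, i.e. with
`|s + t| ≤ 2λ` for `s = ⟪x, φ i⟫`, `t = ⟪y, φ i⟫`, clamping shrinks `|s - t|` at most by half;
the frame bound at `m ∈ B`, applied to `z = x - y`, then gives `(√A / 2)‖x - y‖ ≤ ‖S x - S y‖`.
-/

open RealInnerProductSpace Finset

noncomputable def saturate (lam t : ℝ) : ℝ := Real.sign t * min |t| lam

lemma saturate_eq_max_min {lam : ℝ} (hlam : 0 ≤ lam) (t : ℝ) :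
    saturate lam t = max (-lam) (min t lam) := by
  simp only [saturate, Real.sign, abs_eq_max_neg, max_def, min_def]
  split_ifs <;> linarith

lemma saturate_sub_saturate_of_lt_of_lt_neg {lam s t : ℝ} (hlam : 0 ≤ lam) (hs : lam < s)
    (ht : t < -lam) : saturate lam s - saturate lam t = 2 * lam := by
  simp only [saturate_eq_max_min hlam, max_def, min_def]
  split_ifs <;> linarith

lemma sub_le_two_mul_saturate_sub {lam s t : ℝ} (hlam : 0 ≤ lam) (hmid : |s + t| ≤ 2 * lam)
    (hst : lam < s → -lam ≤ t) (h : t ≤ s) :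
    s - t ≤ 2 * (saturate lam s - saturate lam t) := by
  rw [abs_le] at hmid
  have hst' : s ≤ lam ∨ -lam ≤ t := (le_or_gt s lam).imp_right hst
  simp only [saturate_eq_max_min hlam, max_def, min_def]
  rcases hst' with hs | ht <;> split_ifs <;> linarith

lemma abs_sub_le_two_mul_abs_saturate_sub {lam s t : ℝ} (hlam : 0 ≤ lam)
    (hmid : |s + t| ≤ 2 * lam) (hst : lam < s → -lam ≤ t) (hts : lam < t → -lam ≤ s) :
    |s - t| ≤ 2 * |saturate lam s - saturate lam t| := by
  wlog h : t ≤ s generalizing s t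
  · rw [abs_sub_comm, abs_sub_comm (saturate lam s)]
    exact this (by rwa [add_comm]) hts hst (le_of_not_ge h)
  rw [abs_of_nonneg (sub_nonneg.2 h)]
  exact (sub_le_two_mul_saturate_sub hlam hmid hst h).trans (by gcongr; exact le_abs_self _)

section SaturatedMeasurement

variable {E ι : Type*} [NormedAddCommGroup E] [InnerProductSpace ℝ E] [Fintype ι]

noncomputable def saturatedMeasurement (φ : ι → E) (lam : ℝ) (x : E) : EuclideanSpace ℝ ι :=
  WithLp.toLp 2 fun i => saturate lam ⟪x, φ i⟫

variable {φ : ι → E} {lam : ℝ} {x y : E}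

lemma norm_saturatedMeasurement_sub_sq :
    ‖saturatedMeasurement φ lam x - saturatedMeasurement φ lam y‖ ^ 2 =
      ∑ i, (saturate lam ⟪x, φ i⟫ - saturate lam ⟪y, φ i⟫) ^ 2 := by
  simp [EuclideanSpace.norm_sq_eq, saturatedMeasurement]

lemma two_mul_le_norm_saturatedMeasurement_sub (hlam : 0 ≤ lam) {i : ι}
    (hx : lam < ⟪x, φ i⟫) (hy : ⟪y, φ i⟫ < -lam) :
    2 * lam ≤ ‖saturatedMeasurement φ lam x - saturatedMeasurement φ lam y‖ := by
  have h := PiLp.norm_apply_le (saturatedMeasurement φ lam x - saturatedMeasurement φ lam y) i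
  simpa [saturatedMeasurement, saturate_sub_saturate_of_lt_of_lt_neg hlam hx hy, abs_of_nonneg hlam]
    using h

lemma sum_unsaturated_inner_sq_le (hlam : 0 ≤ lam)
    (hxy : ∀ i, lam < ⟪x, φ i⟫ → -lam ≤ ⟪y, φ i⟫) (hyx : ∀ i, lam < ⟪y, φ i⟫ → -lam ≤ ⟪x, φ i⟫) :
    ∑ i ∈ univ.filter (fun i => |⟪midpoint ℝ x y, φ i⟫| ≤ lam), ⟪x - y, φ i⟫ ^ 2 ≤
      4 * ‖saturatedMeasurement φ lam x - saturatedMeasurement φ lam y‖ ^ 2 := by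
  rw [norm_saturatedMeasurement_sub_sq, mul_sum]
  refine (sum_le_sum fun i hi => ?_).trans
    (sum_le_sum_of_subset_of_nonneg (filter_subset _ _) fun i _ _ => by positivity)
  have hmid : |⟪x, φ i⟫ + ⟪y, φ i⟫| ≤ 2 * lam := by
    have := (mem_filter.1 hi).2
    rw [midpoint_eq_smul_add, real_inner_smul_left, inner_add_left, abs_mul] at this
    norm_num at this
    linarith
  have h := abs_sub_le_two_mul_abs_saturate_sub hlam hmid (hxy i) (hyx i)
  have h2 := pow_le_pow_left₀ (abs_nonneg _) h 2
  rw [mul_pow, sq_abs, sq_abs] at h2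
  rw [inner_sub_left]
  linarith

end SaturatedMeasurement

/-- If `A` is a lower frame bound of every unsaturated collection
on the closed unit ball, then `min{(1/2)·√A, λ}` is a lower Lipschitz bound for
the saturated measurement operator `S_λ` on the ball. -/
theorem saturation_lower_lipschitz
    {n : ℕ} {ι : Type*} [Fintype ι]
    (φ : ι → EuclideanSpace ℝ (Fin n)) (lam : ℝ) (hlam : 0 < lam)
    (S : EuclideanSpace ℝ (Fin n) → EuclideanSpace ℝ ι)
    (hS : ∀ x, S x = fun i : ι => Real.sign ⟪x, φ i⟫ * min |⟪x, φ i⟫| lam)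
    (A : ℝ) (hA : 0 ≤ A)
    (hlow : ∀ x ∈ Metric.closedBall (0 : EuclideanSpace ℝ (Fin n)) 1,
      ∀ z : EuclideanSpace ℝ (Fin n),
        A * ‖z‖ ^ 2 ≤ ∑ i ∈ univ.filter (fun i : ι => |⟪x, φ i⟫| ≤ lam), ⟪z, φ i⟫ ^ 2) :
    ∀ x ∈ Metric.closedBall (0 : EuclideanSpace ℝ (Fin n)) 1,
      ∀ y ∈ Metric.closedBall (0 : EuclideanSpace ℝ (Fin n)) 1,
        min ((1 / 2) * Real.sqrt A) lam * ‖x - y‖ ≤ ‖S x - S y‖ := by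
  obtain rfl : S = saturatedMeasurement φ lam := funext fun x => WithLp.ofLp_injective 2 (hS x)
  intro x hx y hy
  by_cases hopp : ∃ i, (lam < ⟪x, φ i⟫ ∧ ⟪y, φ i⟫ < -lam) ∨ (lam < ⟪y, φ i⟫ ∧ ⟪x, φ i⟫ < -lam)
  · obtain ⟨i, hi⟩ := hopp
    have h2lam : 2 * lam ≤ ‖saturatedMeasurement φ lam x - saturatedMeasurement φ lam y‖ := by
      rcases hi with ⟨hxi, hyi⟩ | ⟨hyi, hxi⟩
      · exact two_mul_le_norm_saturatedMeasurement_sub hlam.le hxi hyi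
      · rw [norm_sub_rev]
        exact two_mul_le_norm_saturatedMeasurement_sub hlam.le hyi hxi
    have hxy : ‖x - y‖ ≤ 2 := by
      rw [mem_closedBall_zero_iff] at hx hy
      linarith [norm_sub_le x y]
    calc min ((1 / 2) * Real.sqrt A) lam * ‖x - y‖ ≤ lam * 2 :=
          mul_le_mul (min_le_right _ _) hxy (norm_nonneg _) hlam.le
      _ ≤ _ := by linarith
  · push Not at hopp
    have hframe := hlow _ ((convex_closedBall 0 1).midpoint_mem hx hy) (x - y)
    have hsum := sum_unsaturated_inner_sq_le hlam.le (fun i => (hopp i).1) (fun i => (hopp i).2)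
    have hsq : ((1 / 2) * Real.sqrt A * ‖x - y‖) ^ 2 ≤
        ‖saturatedMeasurement φ lam x - saturatedMeasurement φ lam y‖ ^ 2 := by
      rw [mul_pow, mul_pow, Real.sq_sqrt hA]
      linarith
    calc min ((1 / 2) * Real.sqrt A) lam * ‖x - y‖ ≤ (1 / 2) * Real.sqrt A * ‖x - y‖ := by
          gcongr; exact min_le_left _ _
      _ ≤ _ := (pow_le_pow_iff_left₀ (by positivity) (norm_nonneg _) two_ne_zero).1 hsq
end

section
/- Let (φ_i)_{i=1}^{n+1} be a frame for ℝ^n consisting of exactly n+1 vectors and let λ > 0 be such that the saturated measurement operator S_λ is one-to-one on the closed unit ball B of ℝ^n. If A ≥ 0 satisfies A‖z‖² ≤ Σ_{i∈I_λ(x)} |⟨z,φ_i⟩|² for every x ∈ B and every z ∈ ℝ^n, then for all x, y ∈ B one has (1/4)·A·‖x−y‖² ≤ ‖S_λ(x) − S_λ(y)‖². -/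
/-! A positive lower bound `A` for the unsaturated vectors at a point forces at least `n` of the
`n + 1` vectors to be unsaturated there. If some index is saturated at both `x` and `y`, every
other index is unsaturated at both, `S_λ` is linear on those coordinates, and the bound at `x`
applies directly. Otherwise use the bound at the midpoint `(x + y) / 2`: on an index unsaturated
there, `a = ⟪x, φ i⟫` and `b = ⟪y, φ i⟫` satisfy `|a + b| ≤ 2λ` and are not both saturated, and
then clipping to `[-λ, λ]` shrinks `|a - b|` by at most a factor `2`. -/

open RealInnerProductSpace Finset

noncomputable def saturation (lam t : ℝ) : ℝ := Real.sign t * min |t| lam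

lemma saturation_of_abs_le {lam t : ℝ} (h : |t| ≤ lam) : saturation lam t = t := by
  rcases lt_trichotomy t 0 with ht | rfl | ht
  · rw [saturation, min_eq_left h, Real.sign_of_neg ht, abs_of_neg ht]; ring
  · simp [saturation]
  · rw [saturation, min_eq_left h, Real.sign_of_pos ht, abs_of_pos ht, one_mul]

lemma saturation_eq_max_min {lam : ℝ} (hlam : 0 ≤ lam) (t : ℝ) :
    saturation lam t = max (-lam) (min t lam) := by
  rcases le_or_gt |t| lam with h | h
  · rw [saturation_of_abs_le h, min_eq_left (abs_le.1 h).2, max_eq_right (abs_le.1 h).1]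
  rcases lt_abs.1 h with ht | ht
  · rw [saturation, min_eq_right h.le, Real.sign_of_pos (by linarith), min_eq_right ht.le,
      max_eq_right (by linarith), one_mul]
  · rw [saturation, min_eq_right h.le, Real.sign_of_neg (by linarith), min_eq_left (by linarith),
      max_eq_left (by linarith)]
    ring

lemma sq_sub_le_four_mul_sq_saturation_sub {lam a b : ℝ} (hmid : |a + b| ≤ 2 * lam)
    (hab : |a| ≤ lam ∨ |b| ≤ lam) :
    (a - b) ^ 2 ≤ 4 * (saturation lam a - saturation lam b) ^ 2 := by
  have hlam : 0 ≤ lam := by linarith [abs_nonneg (a + b)]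
  rw [saturation_eq_max_min hlam, saturation_eq_max_min hlam]
  simp only [abs_le] at hmid hab
  simp only [max_def, min_def]
  split_ifs <;> rcases hab with hab | hab <;> nlinarith

lemma Finset.eq_erase_of_card_le {α : Type*} [Fintype α] [DecidableEq α] {s : Finset α} {i : α}
    (hs : Fintype.card α ≤ #s + 1) (hi : i ∉ s) : s = univ.erase i := by
  refine eq_of_subset_of_card_le
    (fun j hj => mem_erase.2 ⟨ne_of_mem_of_not_mem hj hi, mem_univ j⟩) ?_
  rw [card_erase_of_mem (mem_univ i), card_univ]
  omega

section
variable {E : Type*} [NormedAddCommGroup E] [InnerProductSpace ℝ E] {ι : Type*}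

lemma finrank_le_card_of_lower_frame_bound [FiniteDimensional ℝ E]
    {φ : ι → E} {s : Finset ι} {A : ℝ} (hA : 0 < A)
    (h : ∀ z : E, A * ‖z‖ ^ 2 ≤ ∑ i ∈ s, ⟪z, φ i⟫ ^ 2) : Module.finrank ℝ E ≤ #s := by
  by_contra! hs
  have hK : Submodule.span ℝ (Set.range fun i : s => φ i) ≠ ⊤ := fun hK => by
    have := finrank_range_le_card (R := ℝ) fun i : s => φ i
    rw [Set.finrank, hK, finrank_top, Fintype.card_coe] at this
    omega
  obtain ⟨z, hzK, hz⟩ := Submodule.exists_mem_ne_zero_of_ne_bot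
    (mt Submodule.orthogonal_eq_bot_iff.1 hK)
  have hzero : ∑ i ∈ s, ⟪z, φ i⟫ ^ 2 = 0 := sum_eq_zero fun i hi => by
    rw [(Submodule.mem_orthogonal' _ z).1 hzK (φ i)
      (Submodule.subset_span (Set.mem_range_self (f := fun i : s => φ i) ⟨i, hi⟩)), sq, zero_mul]
  have hpos : 0 < A * ‖z‖ ^ 2 := mul_pos hA (pow_pos (norm_pos_iff.2 hz) 2)
  linarith [h z]

variable [Fintype ι] (φ : ι → E) (lam : ℝ)

noncomputable def unsaturatedSet (x : E) : Finset ι := univ.filter fun i => |⟪x, φ i⟫| ≤ lam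

lemma unsaturatedSet_eq_erase [FiniteDimensional ℝ E] [DecidableEq ι] {A : ℝ} (hA : 0 < A)
    (hcard : Fintype.card ι ≤ Module.finrank ℝ E + 1) {x : E}
    (hlow : ∀ z : E, A * ‖z‖ ^ 2 ≤ ∑ i ∈ unsaturatedSet φ lam x, ⟪z, φ i⟫ ^ 2) {i : ι}
    (hi : lam < |⟪x, φ i⟫|) : unsaturatedSet φ lam x = univ.erase i :=
  eq_erase_of_card_le (hcard.trans (Nat.add_le_add_right
    (finrank_le_card_of_lower_frame_bound hA hlow) 1)) (by simpa [unsaturatedSet] using hi)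

lemma sum_inner_sq_le_of_subset_unsaturatedSet {s : Finset ι} {x y : E}
    (hx : s ⊆ unsaturatedSet φ lam x) (hy : s ⊆ unsaturatedSet φ lam y) :
    ∑ i ∈ s, ⟪x - y, φ i⟫ ^ 2 ≤ ∑ i, (saturation lam ⟪x, φ i⟫ - saturation lam ⟪y, φ i⟫) ^ 2 :=
  calc ∑ i ∈ s, ⟪x - y, φ i⟫ ^ 2
      = ∑ i ∈ s, (saturation lam ⟪x, φ i⟫ - saturation lam ⟪y, φ i⟫) ^ 2 :=
        sum_congr rfl fun i hi => by
          rw [saturation_of_abs_le (mem_filter.1 (hx hi)).2,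
            saturation_of_abs_le (mem_filter.1 (hy hi)).2, inner_sub_left]
    _ ≤ _ := sum_le_sum_of_subset_of_nonneg (subset_univ s) fun _ _ _ => sq_nonneg _

lemma sum_inner_sq_le_four_mul_of_midpoint {x y : E}
    (hxy : ∀ i, |⟪x, φ i⟫| ≤ lam ∨ |⟪y, φ i⟫| ≤ lam) :
    ∑ i ∈ unsaturatedSet φ lam (midpoint ℝ x y), ⟪x - y, φ i⟫ ^ 2 ≤
      4 * ∑ i, (saturation lam ⟪x, φ i⟫ - saturation lam ⟪y, φ i⟫) ^ 2 := by
  rw [mul_sum]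
  refine (sum_le_sum fun i hi => ?_).trans
    (sum_le_sum_of_subset_of_nonneg (subset_univ _) fun _ _ _ => by positivity)
  have hmid : |⟪x, φ i⟫ + ⟪y, φ i⟫| ≤ 2 * lam := by
    have := (mem_filter.1 hi).2
    rw [midpoint_eq_smul_add, invOf_eq_inv, real_inner_smul_left, inner_add_left, abs_mul,
      abs_inv, abs_two] at this
    linarith
  rw [inner_sub_left]
  exact sq_sub_le_four_mul_sq_saturation_sub hmid (hxy i)

end

theorem saturation_lower_bound_n_plus_one_general
    {n : ℕ}
    (φ : Fin (n + 1) → EuclideanSpace ℝ (Fin n))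
    (lam : ℝ)
    (S : EuclideanSpace ℝ (Fin n) → EuclideanSpace ℝ (Fin (n + 1)))
    (hS : ∀ x, S x = fun i => Real.sign ⟪x, φ i⟫ * min |⟪x, φ i⟫| lam)
    (A : ℝ)
    (hlow : ∀ x ∈ Metric.closedBall (0 : EuclideanSpace ℝ (Fin n)) 1,
      ∀ z : EuclideanSpace ℝ (Fin n),
        A * ‖z‖ ^ 2 ≤ ∑ i ∈ univ.filter (fun i => |⟪x, φ i⟫| ≤ lam), ⟪z, φ i⟫ ^ 2) :
    ∀ x ∈ Metric.closedBall (0 : EuclideanSpace ℝ (Fin n)) 1,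
      ∀ y ∈ Metric.closedBall (0 : EuclideanSpace ℝ (Fin n)) 1,
        (1 / 4) * A * ‖x - y‖ ^ 2 ≤ ‖S x - S y‖ ^ 2 := by
  intro x hx y hy
  rcases le_or_gt A 0 with hA | hA
  · nlinarith [sq_nonneg ‖x - y‖, sq_nonneg ‖S x - S y‖]
  have hSxy : ‖S x - S y‖ ^ 2 =
      ∑ i, (saturation lam ⟪x, φ i⟫ - saturation lam ⟪y, φ i⟫) ^ 2 := by
    simp [EuclideanSpace.real_norm_sq_eq, hS, saturation]
  rw [hSxy]
  by_cases hboth : ∃ i, lam < |⟪x, φ i⟫| ∧ lam < |⟪y, φ i⟫|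
  · obtain ⟨i, hxi, hyi⟩ := hboth
    have hcard : Fintype.card (Fin (n + 1)) ≤ Module.finrank ℝ (EuclideanSpace ℝ (Fin n)) + 1 := by
      simp
    have hUx := unsaturatedSet_eq_erase φ lam hA hcard (hlow x hx) hxi
    have hUy := unsaturatedSet_eq_erase φ lam hA hcard (hlow y hy) hyi
    have := (hlow x hx (x - y)).trans (sum_inner_sq_le_of_subset_unsaturatedSet φ lam
      subset_rfl (hUx.trans hUy.symm).le)
    nlinarith [sq_nonneg ‖x - y‖]
  · simp only [not_exists, not_and, not_lt] at hboth
    have := (hlow _ ((convex_closedBall 0 1).midpoint_mem hx hy) (x - y)).trans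
      (sum_inner_sq_le_four_mul_of_midpoint φ lam fun i =>
        (le_or_gt |⟪x, φ i⟫| lam).imp_right (hboth i))
    nlinarith

/-- For a frame of exactly `n+1` vectors in `ℝ^n` whose saturated
measurement operator `S_λ` is one-to-one on the closed unit ball, if `A` is a lower
frame bound of every unsaturated collection, then
`(1/4)·A·‖x−y‖² ≤ ‖S_λ(x) − S_λ(y)‖²` for all `x, y` in the ball. -/
theorem saturation_lower_bound_n_plus_one
    {n : ℕ}
    (φ : Fin (n + 1) → EuclideanSpace ℝ (Fin n))
    (hframe : Submodule.span ℝ (Set.range φ) = ⊤)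
    (lam : ℝ) (hlam : 0 < lam)
    (S : EuclideanSpace ℝ (Fin n) → EuclideanSpace ℝ (Fin (n + 1)))
    (hS : ∀ x, S x = fun i => Real.sign ⟪x, φ i⟫ * min |⟪x, φ i⟫| lam)
    (hinj : Set.InjOn S (Metric.closedBall (0 : EuclideanSpace ℝ (Fin n)) 1))
    (A : ℝ) (hA : 0 ≤ A)
    (hlow : ∀ x ∈ Metric.closedBall (0 : EuclideanSpace ℝ (Fin n)) 1,
      ∀ z : EuclideanSpace ℝ (Fin n),
        A * ‖z‖ ^ 2 ≤ ∑ i ∈ univ.filter (fun i => |⟪x, φ i⟫| ≤ lam), ⟪z, φ i⟫ ^ 2) :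
    ∀ x ∈ Metric.closedBall (0 : EuclideanSpace ℝ (Fin n)) 1,
      ∀ y ∈ Metric.closedBall (0 : EuclideanSpace ℝ (Fin n)) 1,
        (1 / 4) * A * ‖x - y‖ ^ 2 ≤ ‖S x - S y‖ ^ 2 :=
  saturation_lower_bound_n_plus_one_general φ lam S hS A hlow
end
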